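/- Let v be a linear classifier on [0,1]^n with weights w and threshold q, and suppose w_i > w_j > 0. If x ∈ Piv_j(b) \ Piv_i(b) for some b ∈ [0,1] and f_ij(x) ∉ Piv_i(b), then g_ij(x, b) ∈ Piv_i(x_i) \ (Piv_j(x_i) ∪ APiv_j(x_i)). -/

import Mathlib

open MeasureTheory

/-- The linear classifier on ℝ^n with weights w and threshold q. -/
noncomputable def linClass {n : ℕ} (w : Fin n → ℝ) (q : ℝ) (x : Fin n → ℝ) : ℝ :=
  if q ≤ ∑ k, w k * x k then 1 else 0

/-- The unit cube [0,1]^n. -/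
def unitCube (n : ℕ) : Set (Fin n → ℝ) := Set.univ.pi fun _ => Set.Icc 0 1

/-- Piv_i(b): points of the cube that are losing but become winning when
coordinate i is set to b. -/
noncomputable def pivSet {n : ℕ} (w : Fin n → ℝ) (q : ℝ) (i : Fin n) (b : ℝ) :
    Set (Fin n → ℝ) :=
  {x | x ∈ unitCube n ∧ linClass w q x = 0 ∧
    linClass w q (Function.update x i b) = 1}

/-- APiv_i(b): points of the cube that are winning but become losing when
coordinate i is set to b. -/
noncomputable def apivSet {n : ℕ} (w : Fin n → ℝ) (q : ℝ) (i : Fin n) (b : ℝ) :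
    Set (Fin n → ℝ) :=
  {x | x ∈ unitCube n ∧ linClass w q x = 1 ∧
    linClass w q (Function.update x i b) = 0}

/-- The map f_ij swapping coordinates i and j. -/
def swapCoords {n : ℕ} (i j : Fin n) (x : Fin n → ℝ) : Fin n → ℝ :=
  x ∘ Equiv.swap i j

/-- g_ij(x, b): x with coordinate i set to x_j and coordinate j set to b. -/
def gMap {n : ℕ} (i j : Fin n) (x : Fin n → ℝ) (b : ℝ) : Fin n → ℝ :=
  Function.update (Function.update x i (x j)) j b

/-!
Write S = w·x. The hypotheses say S < q ≤ S + w_j (b - x_j) and S + w_i (b - x_i) < q, which forces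
x_j < b and then, as w_i > w_j > 0, x_j < x_i. Hence swapping coordinates i and j lowers the score,
so f_ij(x) is losing and the hypothesis on f_ij(x) says that setting its i-th coordinate to b keeps it
losing; comparing scores, g_ij(x, b) is losing as well. Finally, resetting coordinate i of g_ij(x, b)
to x_i gives x with x_j replaced by b, which wins, while resetting its coordinate j to x_i gives f_ij(x),
which loses.
-/

section LinearClassifier

variable {n : ℕ} {w : Fin n → ℝ} {q : ℝ} {x : Fin n → ℝ} {i j : Fin n} {b : ℝ}

lemma linClass_eq_zero_iff : linClass w q x = 0 ↔ ∑ k, w k * x k < q := by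
  unfold linClass; split_ifs with h <;> simpa using h

lemma linClass_eq_one_iff : linClass w q x = 1 ↔ q ≤ ∑ k, w k * x k := by
  unfold linClass; split_ifs with h <;> simpa using h

lemma sum_mul_update (w x : Fin n → ℝ) (i : Fin n) (b : ℝ) :
    ∑ k, w k * Function.update x i b k = ∑ k, w k * x k + w i * (b - x i) := by
  rw [← sub_eq_iff_eq_add', ← Finset.sum_sub_distrib, Finset.sum_eq_single i]
  · simp [mul_sub]
  · intro k _ hk; simp [hk]
  · simp

lemma le_sum_add_of_mem_pivSet (hx : x ∈ pivSet w q i b) :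
    q ≤ ∑ k, w k * x k + w i * (b - x i) := by
  rw [← sum_mul_update, ← linClass_eq_one_iff]
  exact hx.2.2

lemma sum_add_lt_of_notMem_pivSet (hx : x ∈ unitCube n) (hx0 : linClass w q x = 0)
    (hxi : x ∉ pivSet w q i b) : ∑ k, w k * x k + w i * (b - x i) < q := by
  rw [← sum_mul_update, ← not_le, ← linClass_eq_one_iff]
  exact fun h => hxi ⟨hx, hx0, h⟩

lemma update_mem_unitCube (hx : x ∈ unitCube n) (hb : b ∈ Set.Icc 0 1) :
    Function.update x i b ∈ unitCube n := by
  intro k _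
  rcases eq_or_ne k i with rfl | hk
  · simpa using hb
  · simpa [hk] using hx k trivial

lemma swapCoords_mem_unitCube (hx : x ∈ unitCube n) : swapCoords i j x ∈ unitCube n :=
  fun k _ => hx (Equiv.swap i j k) trivial

lemma gMap_mem_unitCube (hx : x ∈ unitCube n) (hb : b ∈ Set.Icc 0 1) :
    gMap i j x b ∈ unitCube n :=
  update_mem_unitCube (update_mem_unitCube hx (hx j trivial)) hb

lemma gMap_self_eq_swapCoords : gMap i j x (x i) = swapCoords i j x := by
  funext k
  simp only [gMap, swapCoords, Function.comp_apply, Function.update_apply, Equiv.swap_apply_def]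
  split_ifs <;> simp_all

lemma update_gMap_right (c : ℝ) : Function.update (gMap i j x b) j c = gMap i j x c :=
  Function.update_idem _ _ _

lemma update_gMap_left (hij : i ≠ j) :
    Function.update (gMap i j x b) i (x i) = Function.update x j b := by
  rw [gMap, Function.update_comm hij.symm, Function.update_idem, Function.update_eq_self]

lemma sum_mul_gMap (w : Fin n → ℝ) (hij : i ≠ j) :
    ∑ k, w k * gMap i j x b k = ∑ k, w k * x k + w i * (x j - x i) + w j * (b - x j) := by
  rw [gMap, sum_mul_update, sum_mul_update, Function.update_of_ne hij.symm]

lemma swapCoords_apply_left : swapCoords i j x i = x j := by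
  simp [swapCoords]

lemma sum_mul_swapCoords (w : Fin n → ℝ) (hij : i ≠ j) :
    ∑ k, w k * swapCoords i j x k = ∑ k, w k * x k + (w i - w j) * (x j - x i) := by
  rw [← gMap_self_eq_swapCoords, sum_mul_gMap w hij]
  ring

end LinearClassifier

theorem gMap_mem_piv_diff_general
    {n : ℕ} (w : Fin n → ℝ) (q : ℝ)
    (i j : Fin n) (hij : w j < w i) (hj : 0 < w j)
    (b : ℝ) (hb : b ∈ Set.Icc (0 : ℝ) 1)
    (x : Fin n → ℝ) (hx : x ∈ pivSet w q j b) (hx' : x ∉ pivSet w q i b)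
    (hf : swapCoords i j x ∉ pivSet w q i b) :
    gMap i j x b ∈
      pivSet w q i (x i) \ (pivSet w q j (x i) ∪ apivSet w q j (x i)) := by
  have hne : i ≠ j := by rintro rfl; exact lt_irrefl _ hij
  have hwin_j := le_sum_add_of_mem_pivSet hx
  obtain ⟨hxc, hx0, hxj⟩ := hx
  have hlose := linClass_eq_zero_iff.mp hx0
  have hlose_i := sum_add_lt_of_notMem_pivSet hxc hx0 hx'
  have hxj_lt_b : x j < b := by nlinarith
  have hxj_lt_xi : x j < x i := by nlinarith [mul_lt_mul_of_pos_right hij (sub_pos.mpr hxj_lt_b)]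
  have hswap0 : linClass w q (swapCoords i j x) = 0 := by
    rw [linClass_eq_zero_iff, sum_mul_swapCoords w hne]
    nlinarith [mul_pos (sub_pos.mpr hij) (sub_pos.mpr hxj_lt_xi)]
  have hswap_i := sum_add_lt_of_notMem_pivSet (swapCoords_mem_unitCube hxc) hswap0 hf
  rw [sum_mul_swapCoords w hne, swapCoords_apply_left] at hswap_i
  have hg0 : linClass w q (gMap i j x b) = 0 := by
    rw [linClass_eq_zero_iff, sum_mul_gMap w hne]
    nlinarith [mul_lt_mul_of_pos_right hij (sub_pos.mpr hxj_lt_b),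
      mul_le_mul_of_nonneg_left hxj_lt_xi.le hj.le]
  refine ⟨⟨gMap_mem_unitCube hxc hb, hg0, by rw [update_gMap_left hne]; exact hxj⟩, ?_⟩
  rintro (⟨-, -, h⟩ | ⟨-, h, -⟩)
  · rw [update_gMap_right, gMap_self_eq_swapCoords, hswap0] at h
    exact zero_ne_one h
  · rw [hg0] at h
    exact zero_ne_one h

/-- If w_i > w_j > 0, x ∈ Piv_j(b) \ Piv_i(b) and
f_ij(x) ∉ Piv_i(b), then g_ij(x,b) ∈ Piv_i(x_i) \ (Piv_j(x_i) ∪ APiv_j(x_i)). -/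
theorem gMap_mem_piv_diff
    {n : ℕ} (hn : 1 ≤ n) (w : Fin n → ℝ) (q : ℝ) (hw : ∀ k, w k ≠ 0)
    (i j : Fin n) (hij : w j < w i) (hj : 0 < w j)
    (b : ℝ) (hb : b ∈ Set.Icc (0 : ℝ) 1)
    (x : Fin n → ℝ) (hx : x ∈ pivSet w q j b) (hx' : x ∉ pivSet w q i b)
    (hf : swapCoords i j x ∉ pivSet w q i b) :
    gMap i j x b ∈
      pivSet w q i (x i) \ (pivSet w q j (x i) ∪ apivSet w q j (x i)) :=
  gMap_mem_piv_diff_general w q i j hij hj b hb x hx hx' hf
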